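/- If G is a locally free group of finite rank r(G), then for each finitely generated subgroup H of G there exists a free subgroup N of G of rank r(G) such that H ⊆ N. -/
import Mathlib


lemma aux_finite_of_fg_freeGroup {ι : Type*} (h : Group.FG (FreeGroup ι)) : Finite ι := by
  have h1 : Group.FG (Abelianization (FreeGroup ι)) :=
    Group.fg_of_surjective (f := Abelianization.of) (Quot.mk_surjective)
  have h2 : AddGroup.FG (FreeAbelianGroup ι) :=
    GroupFG.iff_add_fg.mp h1
  have h3 : Module.Finite ℤ (FreeAbelianGroup ι) :=
    Module.Finite.iff_addGroup_fg.mpr h2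
  exact Module.Finite.finite_basis (FreeAbelianGroup.basis ι)

lemma aux_exists_rank {G : Type*} [Group G] (K : Subgroup G) (hfg : K.FG)
    (hfree : IsFreeGroup K) : ∃ n : ℕ, Nonempty (K ≃* FreeGroup (Fin n)) := by
  have : Group.FG K := (Group.fg_iff_subgroup_fg K).mpr hfg
  let e := IsFreeGroup.toFreeGroup K
  have : Group.FG (FreeGroup (IsFreeGroup.Generators K)) :=
    Group.fg_of_surjective (f := e.toMonoidHom) e.surjective
  have hfin : Finite (IsFreeGroup.Generators K) := aux_finite_of_fg_freeGroup this
  cases nonempty_fintype (IsFreeGroup.Generators K)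
  exact ⟨Fintype.card (IsFreeGroup.Generators K),
    ⟨e.trans (FreeGroup.freeGroupCongr (Fintype.equivFin _))⟩⟩

lemma aux_fg_sup {G : Type*} [Group G] {H K : Subgroup G} (hH : H.FG) (hK : K.FG) :
    (H ⊔ K).FG := by
  rw [Subgroup.fg_iff] at *
  obtain ⟨s, hs, hsf⟩ := hH
  obtain ⟨t, ht, htf⟩ := hK
  exact ⟨s ∪ t, by rw [Subgroup.closure_union, hs, ht], hsf.union htf⟩

lemma aux_bot_of_equiv_free_zero {G : Type*} [Group G] {K : Subgroup G}
    (e : K ≃* FreeGroup (Fin 0)) : K = ⊥ := by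
  have : Subsingleton (FreeGroup (Fin 0)) := by infer_instance
  have hs : Subsingleton K := e.toEquiv.subsingleton
  ext x
  simp only [Subgroup.mem_bot]
  constructor
  · intro hx
    have : (⟨x, hx⟩ : K) = ⟨1, K.one_mem⟩ := Subsingleton.elim _ _
    exact congrArg Subtype.val this
  · rintro rfl; exact K.one_mem

/-- A group is locally free if every finitely generated subgroup is free. -/
def IsLocallyFree (G : Type*) [Group G] : Prop :=
  ∀ H : Subgroup G, H.FG → IsFreeGroup H

/-- `IsFreeOfRank F n` means that the subgroup `F` is a free group of rank `n`. -/
def IsFreeOfRank {G : Type*} [Group G] (F : Subgroup G) (n : ℕ) : Prop :=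
  Nonempty (F ≃* FreeGroup (Fin n))

/-- `Mu D m` says that `m = μ_G(D)`: `m` is the least positive integer such that `D` is
contained in a free subgroup of `G` of rank `m`. -/
def Mu {G : Type*} [Group G] (D : Subgroup G) (m : ℕ) : Prop :=
  IsLeast {n : ℕ | 0 < n ∧ ∃ F : Subgroup G, D ≤ F ∧ IsFreeOfRank F n} m

/-- `HasRank G m` says that the rank `r(G)` equals `m`: `m` is the maximum of `μ_G(H)`
over the finitely generated subgroups `H` of `G`. -/
def HasRank (G : Type*) [Group G] (m : ℕ) : Prop :=
  IsGreatest {n : ℕ | ∃ D : Subgroup G, D.FG ∧ Mu D n} m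

/-- If `G` is a locally free group of finite rank `r(G)`, then every finitely generated
subgroup `H` of `G` is contained in a free subgroup `N` of `G` of rank exactly `r(G)`. -/
theorem locallyFree_finiteRank_fg_le_free_of_max_rank {G : Type*} [Group G]
    (hlf : IsLocallyFree G) (r : ℕ) (hr : HasRank G r)
    (H : Subgroup G) (hH : H.FG) :
    ∃ N : Subgroup G, IsFreeOfRank N r ∧ H ≤ N := by
  obtain ⟨⟨D, hDfg, hMuD⟩, hmax⟩ := hr
  obtain ⟨⟨hrpos, F, hDF, hFfree⟩, hDleast⟩ := hMuD
  set K := H ⊔ D with hKdef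
  have hKfg : K.FG := aux_fg_sup hH hDfg
  obtain ⟨n, ⟨eK⟩⟩ := aux_exists_rank K hKfg (hlf K hKfg)
  by_cases hn : n = 0
  · subst hn
    have hKbot : K = ⊥ := aux_bot_of_equiv_free_zero eK
    have hHbot : H ≤ (⊥ : Subgroup G) := hKbot ▸ (le_sup_left : H ≤ K)
    exact ⟨F, hFfree, le_trans hHbot bot_le⟩
  · have hnpos : 0 < n := Nat.pos_of_ne_zero hn
    set S := {m : ℕ | 0 < m ∧ ∃ F' : Subgroup G, K ≤ F' ∧ IsFreeOfRank F' m} with hSdef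
    have hne : n ∈ S := ⟨hnpos, K, le_refl K, ⟨eK⟩⟩
    have hMuK : Mu K (sInf S) := ⟨Nat.sInf_mem ⟨n, hne⟩, fun b hb => Nat.sInf_le hb⟩
    have h1 : sInf S ≤ r := hmax ⟨K, hKfg, hMuK⟩
    obtain ⟨hpos', F', hKF', hF'free⟩ := Nat.sInf_mem (⟨n, hne⟩ : S.Nonempty)
    have h2 : r ≤ sInf S :=
      hDleast ⟨hpos', F', le_trans (le_sup_right : D ≤ K) hKF', hF'free⟩
    have heq : sInf S = r := le_antisymm h1 h2
    exact ⟨F', heq ▸ hF'free, le_trans (le_sup_left : H ≤ K) hKF'⟩
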